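/- arXiv:2102.09700 — 5 statements merged into one kernel-verified Lean document; each statement's English description precedes it below -/
import Mathlib

section
/- For a quadratic function f(w) = (1/2)(x^T w - y)^2 with x ≠ 0, the minimizer over α of the function ξ(α) = ‖∇f(w - α v) - ∇f(w) + v‖² satisfies α* = 1/(x^T x) whenever x^T v ≠ 0, i.e., the implicit step-size equals the reciprocal of the Lipschitz smoothness constant of f. -/
/-!
Since the gradient is affine with linear part `x xᵀ`, the vector inside `ξ` is `v - α ⟪x, v⟫ x`,
so `ξ` is a quadratic in `α` with leading coefficient `⟪x, v⟫² ⟪x, x⟫ > 0`; completing the square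
puts its vertex at `α = ⟪x, x⟫⁻¹`.
-/

open scoped RealInnerProductSpace

section

variable {E : Type*} [NormedAddCommGroup E] [InnerProductSpace ℝ E]

theorem norm_sub_smul_inner_smul_sq {x : E} (hx : x ≠ 0) (v : E) (α : ℝ) :
    ‖v - (α * ⟪x, v⟫) • x‖ ^ 2 =
      (‖v‖ ^ 2 - ⟪x, v⟫ ^ 2 / ⟪x, x⟫) + ⟪x, v⟫ ^ 2 * ⟪x, x⟫ * (α - ⟪x, x⟫⁻¹) ^ 2 := by
  have hs : ⟪x, x⟫ ≠ 0 := (real_inner_self_pos.2 hx).ne'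
  rw [norm_sub_sq_real, inner_smul_right, norm_smul, mul_pow, Real.norm_eq_abs, sq_abs,
    ← real_inner_self_eq_norm_sq x, real_inner_comm]
  field_simp
  ring

end

theorem forall_le_and_lt_of_eq_add_mul_sq {ξ : ℝ → ℝ} {m a α₀ : ℝ} (ha : 0 < a)
    (hξ : ∀ α, ξ α = m + a * (α - α₀) ^ 2) :
    (∀ α, ξ α₀ ≤ ξ α) ∧ (∀ α, α ≠ α₀ → ξ α₀ < ξ α) := by
  refine ⟨fun α => ?_, fun α hα => ?_⟩ <;> rw [hξ, hξ, sub_self]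
  · have := sq_nonneg (α - α₀)
    nlinarith
  · have := pow_pos (abs_pos.2 (sub_ne_zero.2 hα)) 2
    rw [sq_abs] at this
    nlinarith

theorem stmt0_general (d : ℕ) (x v w : EuclideanSpace ℝ (Fin d)) (y : ℝ)
    (hx : x ≠ 0) (hxv : ⟪x, v⟫ ≠ 0)
    (gradf : EuclideanSpace ℝ (Fin d) → EuclideanSpace ℝ (Fin d))
    (hgradf : ∀ u, gradf u = (⟪x, u⟫ - y) • x)
    (ξ : ℝ → ℝ)
    (hξ : ∀ α : ℝ, ξ α = ‖gradf (w - α • v) - gradf w + v‖ ^ 2) :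
    (∀ α : ℝ, ξ ((⟪x, x⟫)⁻¹) ≤ ξ α) ∧
    (∀ α : ℝ, α ≠ (⟪x, x⟫)⁻¹ → ξ ((⟪x, x⟫)⁻¹) < ξ α) := by
  have hgrad_diff : ∀ α : ℝ, gradf (w - α • v) - gradf w + v = v - (α * ⟪x, v⟫) • x := by
    intro α
    rw [hgradf, hgradf, inner_sub_right, inner_smul_right]
    module
  refine forall_le_and_lt_of_eq_add_mul_sq ?_ fun α => by
    rw [hξ, hgrad_diff, norm_sub_smul_inner_smul_sq hx]
  have := real_inner_self_pos.2 hx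
  positivity

/-- For a quadratic function `f w = (1/2) (⟪x, w⟫ - y)^2` with `x ≠ 0` and `⟪x, v⟫ ≠ 0`,
the unique minimizer of `ξ α = ‖∇f(w - α v) - ∇f(w) + v‖²` is `α* = 1 / ⟪x, x⟫`,
the reciprocal of the Lipschitz smoothness constant of `f`. -/
theorem stmt0 (d : ℕ) (x v w : EuclideanSpace ℝ (Fin d)) (y : ℝ)
    (hx : x ≠ 0) (hxv : ⟪x, v⟫ ≠ 0)
    (f : EuclideanSpace ℝ (Fin d) → ℝ)
    (hf : ∀ u, f u = (1 / 2) * (⟪x, u⟫ - y) ^ 2)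
    (gradf : EuclideanSpace ℝ (Fin d) → EuclideanSpace ℝ (Fin d))
    (hgradf : ∀ u, gradf u = (⟪x, u⟫ - y) • x)
    (ξ : ℝ → ℝ)
    (hξ : ∀ α : ℝ, ξ α = ‖gradf (w - α • v) - gradf w + v‖ ^ 2) :
    (∀ α : ℝ, ξ ((⟪x, x⟫)⁻¹) ≤ ξ α) ∧
    (∀ α : ℝ, α ≠ (⟪x, x⟫)⁻¹ → ξ ((⟪x, x⟫)⁻¹) < ξ α) :=
  stmt0_general d x v w y hx hxv gradf hgradf ξ hξ
end

section
/- If a deterministic step of the recursion v_t = v_{t-1} - (∇f(w_{t-1}) - ∇f(w_t)) is taken with w_t = w_{t-1} - α_{t-1} v_{t-1}, f convex and L-smooth on the segment between w_{t-1} and w_t, and step-size α_{t-1} ≤ 2/L, then ‖v_t‖ ≤ ‖v_{t-1}‖. -/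
open scoped RealInnerProductSpace

section InnerProductSpace

variable {E : Type*} [NormedAddCommGroup E] [InnerProductSpace ℝ E]

theorem norm_sub_le_norm_of_norm_sq_le_two_inner {g v : E} (h : ‖g‖ ^ 2 ≤ 2 * ⟪g, v⟫) :
    ‖v - g‖ ≤ ‖v‖ := by
  have hsq : ‖v - g‖ ^ 2 ≤ ‖v‖ ^ 2 := by
    rw [norm_sub_sq_real, real_inner_comm]
    linarith
  exact (pow_le_pow_iff_left₀ (norm_nonneg _) (norm_nonneg _) two_ne_zero).mp hsq

theorem norm_sq_le_two_inner_of_cocoercive {g v : E} {L α : ℝ} (hL : 0 < L) (hα : 0 < α)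
    (hαL : α ≤ 2 / L) (hco : ⟪g, α • v⟫ ≥ (1 / L) * ‖g‖ ^ 2) :
    ‖g‖ ^ 2 ≤ 2 * ⟪g, v⟫ := by
  rw [real_inner_smul_right, ge_iff_le, one_div_mul_eq_div, div_le_iff₀ hL] at hco
  have hαL' : α * L ≤ 2 := (le_div_iff₀ hL).mp hαL
  have hinner : 0 ≤ ⟪g, v⟫ := by nlinarith [mul_pos hα hL, sq_nonneg ‖g‖]
  calc ‖g‖ ^ 2 ≤ (α * L) * ⟪g, v⟫ := by linarith
    _ ≤ 2 * ⟪g, v⟫ := mul_le_mul_of_nonneg_right hαL' hinner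

end InnerProductSpace

/-- One deterministic step of the SARAH recursion: if `f` is convex and `L`-smooth on the
segment between `w₀` and `w₁ = w₀ - α • v₀` (so cocoercivity holds there), and `0 < α ≤ 2/L`,
then for `v₁ = v₀ - (∇f w₀ - ∇f w₁)` we have `‖v₁‖ ≤ ‖v₀‖`. -/
theorem stmt7 (d : ℕ) (f : EuclideanSpace ℝ (Fin d) → ℝ) (L α : ℝ)
    (hL : 0 < L) (hα : 0 < α) (hαL : α ≤ 2 / L)
    (w₀ w₁ v₀ v₁ : EuclideanSpace ℝ (Fin d))
    (hupd : w₁ = w₀ - α • v₀)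
    (hco : ⟪gradient f w₀ - gradient f w₁, w₀ - w₁⟫ ≥
      (1 / L) * ‖gradient f w₀ - gradient f w₁‖ ^ 2)
    (hv : v₁ = v₀ - (gradient f w₀ - gradient f w₁)) :
    ‖v₁‖ ≤ ‖v₀‖ := by
  have hstep : w₀ - w₁ = α • v₀ := by rw [hupd, sub_sub_cancel]
  rw [hstep] at hco
  rw [hv]
  exact norm_sub_le_norm_of_norm_sq_le_two_inner
    (norm_sq_le_two_inner_of_cocoercive hL hα hαL hco)
end

section
/- If local smoothness parameters satisfy L^t ≤ L for all t = 0,...,m, then H = ∑_{t=0}^m 1/L^t ≥ (m+1)/L ≥ α(m+1) for any constant step-size α ≤ 1/L. Consequently, the contraction factor σ = 1/(μH) + η_0 L^0/(2 - η_0 L^0) with η_0 = 1/L^0 is at most the classical SARAH contraction factor 1/(μα(m+1)) + αL/(2 - αL) with α = 1/L. -/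
open scoped BigOperators

/-! Each step size `1/L^t` is at least `1/L`, so `H ≥ (m+1)/L`. Since `η₀ L⁰ = 1 = (1/L) L`,
the two contraction factors share their second term, and the comparison reduces to the
antitonicity of `H ↦ 1/(μ H)`. -/

theorem Finset.card_div_le_sum_inv {ι : Type*} (s : Finset ι) {L : ℝ} {f : ι → ℝ}
    (hpos : ∀ i ∈ s, 0 < f i) (hle : ∀ i ∈ s, f i ≤ L) :
    (s.card : ℝ) / L ≤ ∑ i ∈ s, (f i)⁻¹ := by
  calc (s.card : ℝ) / L = ∑ _i ∈ s, L⁻¹ := by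
        rw [Finset.sum_const, nsmul_eq_mul, div_eq_mul_inv]
    _ ≤ ∑ i ∈ s, (f i)⁻¹ :=
        Finset.sum_le_sum fun i hi => inv_anti₀ (hpos i hi) (hle i hi)

theorem stmt12_general (μ L : ℝ) (hμ : 0 < μ) (hL : 0 < L) (m : ℕ)
    (Lt : ℕ → ℝ) (hLt : ∀ t ≤ m, 0 < Lt t) (hLtL : ∀ t ≤ m, Lt t ≤ L)
    (η : ℕ → ℝ) (hη : ∀ t ≤ m, η t = 1 / Lt t)
    (H : ℝ) (hH : H = ∑ t ∈ Finset.range (m + 1), η t)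
    (α : ℝ) (hαL : α ≤ 1 / L) :
    H ≥ (m + 1) / L ∧ (m + 1) / L ≥ α * (m + 1) ∧
      1 / (μ * H) + η 0 * Lt 0 / (2 - η 0 * Lt 0) ≤
        1 / (μ * ((1 / L) * (m + 1))) + (1 / L) * L / (2 - (1 / L) * L) := by
  have hmem : ∀ t ∈ Finset.range (m + 1), t ≤ m := fun _ ht => Finset.mem_range_succ_iff.mp ht
  have hHge : (m + 1) / L ≤ H := by
    have hsum := (Finset.range (m + 1)).card_div_le_sum_inv
      (fun t ht => hLt t (hmem t ht)) (fun t ht => hLtL t (hmem t ht))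
    rw [hH, Finset.sum_congr rfl fun t ht => (hη t (hmem t ht)).trans (one_div _)]
    simpa using hsum
  have hη0 : η 0 * Lt 0 = 1 := by
    rw [hη 0 m.zero_le, one_div_mul_cancel (hLt 0 m.zero_le).ne']
  refine ⟨hHge, ?_, ?_⟩
  · rw [ge_iff_le, ← one_div_mul_eq_div]
    exact mul_le_mul_of_nonneg_right hαL (by positivity)
  · rw [hη0, one_div_mul_cancel hL.ne', one_div_mul_eq_div]
    gcongr

/-- If local smoothness parameters satisfy `L^t ≤ L` for `t = 0, ..., m`, then
`H = ∑ 1/L^t ≥ (m+1)/L ≥ α (m+1)` for any constant step-size `α ≤ 1/L`, and consequently the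
adaptive contraction factor `1/(μ H) + η₀ L⁰/(2 - η₀ L⁰)` with `η₀ = 1/L⁰` is at most the
classical SARAH contraction factor `1/(μ α (m+1)) + α L/(2 - α L)` at `α = 1/L`. -/
theorem stmt12 (μ L : ℝ) (hμ : 0 < μ) (hL : 0 < L) (m : ℕ)
    (Lt : ℕ → ℝ) (hLt : ∀ t ≤ m, 0 < Lt t) (hLtL : ∀ t ≤ m, Lt t ≤ L)
    (η : ℕ → ℝ) (hη : ∀ t ≤ m, η t = 1 / Lt t)
    (H : ℝ) (hH : H = ∑ t ∈ Finset.range (m + 1), η t)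
    (α : ℝ) (hα : 0 < α) (hαL : α ≤ 1 / L) :
    H ≥ (m + 1) / L ∧ (m + 1) / L ≥ α * (m + 1) ∧
      1 / (μ * H) + η 0 * Lt 0 / (2 - η 0 * Lt 0) ≤
        1 / (μ * ((1 / L) * (m + 1))) + (1 / L) * L / (2 - (1 / L) * L) :=
  stmt12_general μ L hμ hL m Lt hLt hLtL η hη H hH α hαL
end

section
/- In Algorithm with bounded adaptive step-sizes, under the smoothness of P with constant L̄_k and step-sizes α_{t-1} ∈ [α_min^k, α_max^k] with α_max^k ≤ 1/L̄_k, the iterates satisfy ∑_{t=0}^m E[‖∇P(w_t)‖²] ≤ (2/α_min^k) E[P(w_0) - P(w*)] + (α_max^k/α_min^k) ∑_{t=0}^m E[‖∇P(w_t) - v_t‖²]. -/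
open MeasureTheory
open scoped RealInnerProductSpace BigOperators

/-! Since `α ≤ 1 / L̄`, the smoothness inequality along `w_{t+1} = w_t - α v_t` gives the
descent estimate `(α/2) ‖∇P(w_t)‖² ≤ P(w_t) - P(w_{t+1}) + (α/2) ‖∇P(w_t) - v_t‖²`, because
`-2⟪g, v⟫ + ‖v‖² = ‖g - v‖² - ‖g‖²`. Bounding `α` by `α_min` and `α_max`, summing (the values of
`P` telescope, and `P(w_{m+1}) ≥ P(w*)`) gives the bound for every sample path; integrating
it gives the theorem. -/

lemma mul_le_one_of_le_one_div {L α : ℝ} (hα : 0 ≤ α) (hαL : α ≤ 1 / L) : L * α ≤ 1 := by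
  rcases le_or_gt L 0 with hL | hL
  · nlinarith
  · rwa [le_div_iff₀ hL, mul_comm] at hαL

section Descent

variable {E : Type*} [NormedAddCommGroup E] [InnerProductSpace ℝ E] {f : E → ℝ}

lemma descent_step_of_smooth {g x y v : E} {α L : ℝ} (hα : 0 ≤ α) (hαL : α ≤ 1 / L)
    (hy : y = x - α • v)
    (hsmooth : f y ≤ f x + ⟪g, y - x⟫ + L / 2 * ‖y - x‖ ^ 2) :
    α / 2 * ‖g‖ ^ 2 ≤ f x - f y + α / 2 * ‖g - v‖ ^ 2 := by
  have hyx : y - x = -(α • v) := by rw [hy]; abel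
  have hquad : L / 2 * ‖y - x‖ ^ 2 ≤ α / 2 * ‖v‖ ^ 2 := by
    rw [hyx, norm_neg, norm_smul, Real.norm_of_nonneg hα, mul_pow]
    have : L * α * α ≤ α := by nlinarith [mul_le_one_of_le_one_div hα hαL]
    nlinarith [sq_nonneg ‖v‖]
  have hlin : ⟪g, y - x⟫ = -α * ⟪g, v⟫ := by
    rw [hyx, inner_neg_right, real_inner_smul_right]; ring
  have hpolar := norm_sub_sq_real g v
  nlinarith

lemma sum_norm_sq_le_of_descent {fstar αmin αmax L : ℝ} (hαmin : 0 < αmin)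
    (hstar : ∀ u, fstar ≤ f u) (n : ℕ) (α : ℕ → ℝ) (hα : ∀ t, αmin ≤ α t ∧ α t ≤ αmax)
    (hαL : ∀ t, α t ≤ 1 / L) (w g v : ℕ → E)
    (hupd : ∀ t < n, w (t + 1) = w t - α t • v t)
    (hsmooth : ∀ t < n,
      f (w (t + 1)) ≤ f (w t) + ⟪g t, w (t + 1) - w t⟫ + L / 2 * ‖w (t + 1) - w t‖ ^ 2) :
    ∑ t ∈ Finset.range n, ‖g t‖ ^ 2 ≤
      2 / αmin * (f (w 0) - fstar) + αmax / αmin * ∑ t ∈ Finset.range n, ‖g t - v t‖ ^ 2 := by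
  have hstep : ∀ t ∈ Finset.range n,
      αmin / 2 * ‖g t‖ ^ 2 ≤ f (w t) - f (w (t + 1)) + αmax / 2 * ‖g t - v t‖ ^ 2 := by
    intro t ht
    have ht : t < n := Finset.mem_range.mp ht
    obtain ⟨hlo, hhi⟩ := hα t
    have h := descent_step_of_smooth (hαmin.le.trans hlo) (hαL t) (hupd t ht) (hsmooth t ht)
    nlinarith [sq_nonneg ‖g t‖, sq_nonneg ‖g t - v t‖]
  have hsum := Finset.sum_le_sum hstep
  rw [Finset.sum_add_distrib, Finset.sum_range_sub' (fun t => f (w t)), ← Finset.mul_sum,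
    ← Finset.mul_sum] at hsum
  calc ∑ t ∈ Finset.range n, ‖g t‖ ^ 2
      = 2 / αmin * (αmin / 2 * ∑ t ∈ Finset.range n, ‖g t‖ ^ 2) := by field_simp
    _ ≤ 2 / αmin * (f (w 0) - fstar + αmax / 2 * ∑ t ∈ Finset.range n, ‖g t - v t‖ ^ 2) := by
      gcongr
      linarith [hstar (w n)]
    _ = _ := by ring

end Descent

theorem stmt13_general (d : ℕ) {Ω : Type*} [MeasurableSpace Ω]
    (μ : Measure Ω) [IsProbabilityMeasure μ]
    (P : EuclideanSpace ℝ (Fin d) → ℝ) (wstar : EuclideanSpace ℝ (Fin d))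
    (hstar : ∀ u, P wstar ≤ P u)
    (m : ℕ) (Lbar αmin αmax : ℝ)
    (hαmin : 0 < αmin) (hαmax : αmax ≤ 1 / Lbar)
    (α : ℕ → Ω → ℝ) (hα : ∀ t ω, αmin ≤ α t ω ∧ α t ω ≤ αmax)
    (w v : ℕ → Ω → EuclideanSpace ℝ (Fin d))
    (hupd : ∀ ω, ∀ t, 1 ≤ t → t ≤ m + 1 →
      w t ω = w (t - 1) ω - α (t - 1) ω • v (t - 1) ω)
    -- `P` is `L̄_k`-smooth on the working set containing all iterates:
    (hsmooth : ∀ ω, ∀ t, 1 ≤ t → t ≤ m + 1 →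
      P (w t ω) ≤ P (w (t - 1) ω) + ⟪gradient P (w (t - 1) ω), w t ω - w (t - 1) ω⟫
        + Lbar / 2 * ‖w t ω - w (t - 1) ω‖ ^ 2)
    (hint1 : ∀ t, Integrable (fun ω => P (w t ω)) μ)
    (hint2 : ∀ t, Integrable (fun ω => ‖gradient P (w t ω)‖ ^ 2) μ)
    (hint3 : ∀ t, Integrable (fun ω => ‖gradient P (w t ω) - v t ω‖ ^ 2) μ) :
    ∑ t ∈ Finset.range (m + 1), ∫ ω, ‖gradient P (w t ω)‖ ^ 2 ∂μ ≤
      (2 / αmin) * ∫ ω, (P (w 0 ω) - P wstar) ∂μ +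
      (αmax / αmin) *
        ∑ t ∈ Finset.range (m + 1), ∫ ω, ‖gradient P (w t ω) - v t ω‖ ^ 2 ∂μ := by
  have hpointwise : ∀ ω, ∑ t ∈ Finset.range (m + 1), ‖gradient P (w t ω)‖ ^ 2 ≤
      2 / αmin * (P (w 0 ω) - P wstar) +
        αmax / αmin * ∑ t ∈ Finset.range (m + 1), ‖gradient P (w t ω) - v t ω‖ ^ 2 := fun ω =>
    sum_norm_sq_le_of_descent hαmin hstar (m + 1) (α · ω) (hα · ω)
      (fun t => (hα t ω).2.trans hαmax) (w · ω) (fun t => gradient P (w t ω)) (v · ω)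
      (fun t ht => by simpa using hupd ω (t + 1) (by omega) (by omega))
      (fun t ht => by simpa using hsmooth ω (t + 1) (by omega) (by omega))
  have hgap : Integrable (fun ω => P (w 0 ω) - P wstar) μ := (hint1 0).sub (integrable_const _)
  have hnoise := integrable_finsetSum (Finset.range (m + 1)) fun t _ => hint3 t
  calc ∑ t ∈ Finset.range (m + 1), ∫ ω, ‖gradient P (w t ω)‖ ^ 2 ∂μ
      = ∫ ω, ∑ t ∈ Finset.range (m + 1), ‖gradient P (w t ω)‖ ^ 2 ∂μ :=
        (integral_finsetSum _ fun t _ => hint2 t).symm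
    _ ≤ ∫ ω, 2 / αmin * (P (w 0 ω) - P wstar) +
          αmax / αmin * ∑ t ∈ Finset.range (m + 1), ‖gradient P (w t ω) - v t ω‖ ^ 2 ∂μ :=
        integral_mono (integrable_finsetSum _ fun t _ => hint2 t)
          ((hgap.const_mul _).add (hnoise.const_mul _)) hpointwise
    _ = _ := by
      rw [integral_add (hgap.const_mul _) (hnoise.const_mul _), integral_const_mul,
        integral_const_mul, integral_finsetSum _ fun t _ => hint3 t]

/-- Bounded adaptive step-sizes: if `P` is `L̄_k`-smooth along the iterates and
`α_{t-1} ∈ [α_min^k, α_max^k]` with `α_max^k ≤ 1/L̄_k`, then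
`∑_{t=0}^m E[‖∇P(w_t)‖²] ≤ (2/α_min^k) E[P(w₀) - P(w*)] + (α_max^k/α_min^k) ∑_{t=0}^m E[‖∇P(w_t) - v_t‖²]`. -/
theorem stmt13 (d : ℕ) {Ω : Type*} [MeasurableSpace Ω]
    (μ : Measure Ω) [IsProbabilityMeasure μ]
    (P : EuclideanSpace ℝ (Fin d) → ℝ) (wstar : EuclideanSpace ℝ (Fin d))
    (hstar : ∀ u, P wstar ≤ P u)
    (m : ℕ) (Lbar αmin αmax : ℝ) (hLbar : 0 < Lbar)
    (hαmin : 0 < αmin) (hαminmax : αmin ≤ αmax) (hαmax : αmax ≤ 1 / Lbar)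
    (α : ℕ → Ω → ℝ) (hα : ∀ t ω, αmin ≤ α t ω ∧ α t ω ≤ αmax)
    (w v : ℕ → Ω → EuclideanSpace ℝ (Fin d))
    (hupd : ∀ ω, ∀ t, 1 ≤ t → t ≤ m + 1 →
      w t ω = w (t - 1) ω - α (t - 1) ω • v (t - 1) ω)
    -- `P` is `L̄_k`-smooth on the working set containing all iterates:
    (hsmooth : ∀ ω, ∀ t, 1 ≤ t → t ≤ m + 1 →
      P (w t ω) ≤ P (w (t - 1) ω) + ⟪gradient P (w (t - 1) ω), w t ω - w (t - 1) ω⟫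
        + Lbar / 2 * ‖w t ω - w (t - 1) ω‖ ^ 2)
    (hint1 : ∀ t, Integrable (fun ω => P (w t ω)) μ)
    (hint2 : ∀ t, Integrable (fun ω => ‖gradient P (w t ω)‖ ^ 2) μ)
    (hint3 : ∀ t, Integrable (fun ω => ‖gradient P (w t ω) - v t ω‖ ^ 2) μ)
    (hint4 : ∀ t, Integrable (fun ω => ‖v t ω‖ ^ 2) μ) :
    ∑ t ∈ Finset.range (m + 1), ∫ ω, ‖gradient P (w t ω)‖ ^ 2 ∂μ ≤
      (2 / αmin) * ∫ ω, (P (w 0 ω) - P wstar) ∂μ +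
      (αmax / αmin) *
        ∑ t ∈ Finset.range (m + 1), ∫ ω, ‖gradient P (w t ω) - v t ω‖ ^ 2 ∂μ :=
  stmt13_general d μ P wstar hstar m Lbar αmin αmax hαmin hαmax α hα w v hupd hsmooth hint1 hint2
    hint3
end

section
/- If f is convex and L-smooth on ℝ^d, then for the update w' = w - αv with 0 < α < 2/L and v' = v - (∇f(w) - ∇f(w')), one has ‖v'‖² ≤ ‖v‖² + (1 - 2/(αL))‖v' - v‖², and consequently ‖v - v'‖² ≤ (αL/(2 - αL))(‖v‖² - ‖v'‖²). -/
/-!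
Put `g = ∇f(w) - ∇f(w')`, so that `v' = v - g` and `w - w' = α v`. Cocoercivity applied to
`w, w'` reads `‖g‖² ≤ α L ⟪g, v⟫`, and expanding `‖v - g‖²` turns this into the first
inequality. For `0 < α L < 2` the coefficient `1 - 2/(α L)` is negative, and solving the first
inequality for `‖v - v'‖² = ‖g‖²` gives the second.
-/

open scoped RealInnerProductSpace

theorem norm_sub_sq_le_of_norm_sq_le_mul_inner {E : Type*} [NormedAddCommGroup E]
    [InnerProductSpace ℝ E] {c : ℝ} (hc : 0 < c) {g v : E} (h : ‖g‖ ^ 2 ≤ c * ⟪g, v⟫) :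
    ‖v - g‖ ^ 2 ≤ ‖v‖ ^ 2 + (1 - 2 / c) * ‖g‖ ^ 2 := by
  have h2 : 2 / c * ‖g‖ ^ 2 ≤ 2 * ⟪v, g⟫ := by
    rw [real_inner_comm, div_mul_eq_mul_div, div_le_iff₀ hc]
    linarith
  rw [norm_sub_sq_real]
  linarith

theorem le_mul_sub_of_le_add_mul {a b y c : ℝ} (hc : 0 < c) (hc2 : c < 2)
    (h : b ≤ a + (1 - 2 / c) * y) : y ≤ c / (2 - c) * (a - b) := by
  have hsub : 0 < 2 - c := by linarith
  have h' : (2 - c) * y ≤ c * (a - b) := by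
    have := mul_le_mul_of_nonneg_left h hc.le
    rw [mul_add, ← mul_assoc, mul_sub, mul_one, mul_div_cancel₀ _ hc.ne'] at this
    linarith
  rw [div_mul_eq_mul_div, le_div_iff₀ hsub]
  linarith

theorem stmt19_general (d : ℕ) (f : EuclideanSpace ℝ (Fin d) → ℝ) (L α : ℝ)
    (hL : 0 < L) (hα : 0 < α) (hαL : α < 2 / L)
    (hco : ∀ a b : EuclideanSpace ℝ (Fin d),
      ⟪gradient f a - gradient f b, a - b⟫ ≥ (1 / L) * ‖gradient f a - gradient f b‖ ^ 2)
    (w w' v v' : EuclideanSpace ℝ (Fin d))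
    (hw' : w' = w - α • v)
    (hv' : v' = v - gradient f w + gradient f w') :
    ‖v'‖ ^ 2 ≤ ‖v‖ ^ 2 + (1 - 2 / (α * L)) * ‖v' - v‖ ^ 2 ∧
      ‖v - v'‖ ^ 2 ≤ (α * L / (2 - α * L)) * (‖v‖ ^ 2 - ‖v'‖ ^ 2) := by
  have hαL2 : α * L < 2 := (lt_div_iff₀ hL).mp hαL
  have hcoco : ‖gradient f w - gradient f w'‖ ^ 2
      ≤ α * L * ⟪gradient f w - gradient f w', v⟫ := by
    have h := hco w w'
    rw [show w - w' = α • v by rw [hw', sub_sub_cancel], real_inner_smul_right, ge_iff_le,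
      one_div, inv_mul_le_iff₀ hL] at h
    linarith
  set g := gradient f w - gradient f w'
  have hv'g : v' = v - g := by rw [hv', sub_sub_eq_add_sub, add_sub_right_comm]
  have hvv' : v - v' = g := by rw [hv'g, sub_sub_cancel]
  have hfirst := norm_sub_sq_le_of_norm_sq_le_mul_inner (by positivity) hcoco
  rw [← hv'g] at hfirst
  rw [norm_sub_rev v' v, hvv']
  exact ⟨hfirst, le_mul_sub_of_le_add_mul (by positivity) hαL2 hfirst⟩

/-- If `f` is convex and `L`-smooth (so cocoercivity holds), then for the update
`w' = w - α v` with `0 < α < 2/L` and `v' = v - (∇f w - ∇f w')`, one has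
`‖v'‖² ≤ ‖v‖² + (1 - 2/(α L)) ‖v' - v‖²`, and consequently
`‖v - v'‖² ≤ (α L/(2 - α L)) (‖v‖² - ‖v'‖²)`. -/
theorem stmt19 (d : ℕ) (f : EuclideanSpace ℝ (Fin d) → ℝ) (L α : ℝ)
    (hL : 0 < L) (hα : 0 < α) (hαL : α < 2 / L)
    (hdiff : ∀ u, DifferentiableAt ℝ f u)
    (hconv : ConvexOn ℝ Set.univ f)
    (hco : ∀ a b : EuclideanSpace ℝ (Fin d),
      ⟪gradient f a - gradient f b, a - b⟫ ≥ (1 / L) * ‖gradient f a - gradient f b‖ ^ 2)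
    (w w' v v' : EuclideanSpace ℝ (Fin d))
    (hw' : w' = w - α • v)
    (hv' : v' = v - gradient f w + gradient f w') :
    ‖v'‖ ^ 2 ≤ ‖v‖ ^ 2 + (1 - 2 / (α * L)) * ‖v' - v‖ ^ 2 ∧
      ‖v - v'‖ ^ 2 ≤ (α * L / (2 - α * L)) * (‖v‖ ^ 2 - ‖v'‖ ^ 2) :=
  stmt19_general d f L α hL hα hαL hco w w' v v' hw' hv'
end
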